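/- If the 2×3 matrix r = (A B C; D E F) with entries in W determines a stable representation of the 3-Kronecker quiver of dimension vector (2,3), then the two tensors Syz¹_r and Syz²_r are linearly independent in W ⊗ S²W. -/

import Mathlib

open MvPolynomial TensorProduct

noncomputable section

/-- The polynomial ring ℂ[x,y,z]. -/
abbrev Pxyz : Type := MvPolynomial (Fin 3) ℂ

/-- The linear form in ℂ[x,y,z] with coefficient vector `w`,
identifying `W = ℂ³` with the space of linear forms via the basis `x, y, z`. -/
def toPoly (w : Fin 3 → ℂ) : Pxyz := ∑ k, MvPolynomial.C (w k) * MvPolynomial.X k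

/-- The representation `(ρ₁, ρ₂, ρ₃)` of the 3-Kronecker quiver of dimension vector `(2,3)`
determined by a 2×3 matrix `r` of linear forms (given by their coefficient vectors), via
`v·r = x·ρ₁(v) + y·ρ₂(v) + z·ρ₃(v)`. -/
def repOf (r : Matrix (Fin 2) (Fin 3) (Fin 3 → ℂ)) (k : Fin 3) :
    (Fin 2 → ℂ) →ₗ[ℂ] (Fin 3 → ℂ) :=
  ∑ i : Fin 2, (LinearMap.proj i : (Fin 2 → ℂ) →ₗ[ℂ] ℂ).smulRight (fun j => r i j k)

/-- Stability (for the stability parameter θ = (3,−2)) of a representation of the 3-Kronecker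
quiver of dimension vector (2,3): for every subrepresentation `(U₁, U₂)` other than `(0,0)` and
`(ℂ², ℂ³)` one has `3·dim U₁ < 2·dim U₂`. -/
def KStable (ρ : Fin 3 → ((Fin 2 → ℂ) →ₗ[ℂ] (Fin 3 → ℂ))) : Prop :=
  ∀ (U₁ : Submodule ℂ (Fin 2 → ℂ)) (U₂ : Submodule ℂ (Fin 3 → ℂ)),
    (∀ k, U₁.map (ρ k) ≤ U₂) →
    ¬(U₁ = ⊥ ∧ U₂ = ⊥) → ¬(U₁ = ⊤ ∧ U₂ = ⊤) →
    3 * Module.finrank ℂ U₁ < 2 * Module.finrank ℂ U₂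

/-- The three maximal minors of a 2×3 matrix of polynomials: `minorP m k` is (up to sign) the
2×2 minor obtained by deleting the `k`-th column. -/
def minorP (m : Matrix (Fin 2) (Fin 3) Pxyz) (k : Fin 3) : Pxyz :=
  m 0 (k + 1) * m 1 (k + 2) - m 0 (k + 2) * m 1 (k + 1)

/-- The three maximal minors of a 2×3 matrix of linear forms; they are elements of `S²W`,
i.e. homogeneous quadratic polynomials in ℂ[x,y,z]. -/
def minor (r : Matrix (Fin 2) (Fin 3) (Fin 3 → ℂ)) (k : Fin 3) : Pxyz :=
  minorP (Matrix.of fun i j => toPoly (r i j)) k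

/-- `H_r ⊆ S²W`, the linear span of the three maximal minors of `r`. -/
def Hr (r : Matrix (Fin 2) (Fin 3) (Fin 3 → ℂ)) : Submodule ℂ Pxyz :=
  Submodule.span ℂ (Set.range (minor r))

/-- The first canonical syzygy tensor
`Syz¹_r = A⊗(BF−CE) − B⊗(AF−CD) + C⊗(AE−BD) ∈ W ⊗ S²W` for `r = (A B C; D E F)`,
viewed inside `ℂ[x,y,z] ⊗ ℂ[x,y,z]`. -/
def syz1 (r : Matrix (Fin 2) (Fin 3) (Fin 3 → ℂ)) : Pxyz ⊗[ℂ] Pxyz :=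
  toPoly (r 0 0) ⊗ₜ[ℂ] (toPoly (r 0 1) * toPoly (r 1 2) - toPoly (r 0 2) * toPoly (r 1 1))
    - toPoly (r 0 1) ⊗ₜ[ℂ] (toPoly (r 0 0) * toPoly (r 1 2) - toPoly (r 0 2) * toPoly (r 1 0))
    + toPoly (r 0 2) ⊗ₜ[ℂ] (toPoly (r 0 0) * toPoly (r 1 1) - toPoly (r 0 1) * toPoly (r 1 0))

/-- The second canonical syzygy tensor
`Syz²_r = D⊗(BF−CE) − E⊗(AF−CD) + F⊗(AE−BD) ∈ W ⊗ S²W` for `r = (A B C; D E F)`,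
viewed inside `ℂ[x,y,z] ⊗ ℂ[x,y,z]`. -/
def syz2 (r : Matrix (Fin 2) (Fin 3) (Fin 3 → ℂ)) : Pxyz ⊗[ℂ] Pxyz :=
  toPoly (r 1 0) ⊗ₜ[ℂ] (toPoly (r 0 1) * toPoly (r 1 2) - toPoly (r 0 2) * toPoly (r 1 1))
    - toPoly (r 1 1) ⊗ₜ[ℂ] (toPoly (r 0 0) * toPoly (r 1 2) - toPoly (r 0 2) * toPoly (r 1 0))
    + toPoly (r 1 2) ⊗ₜ[ℂ] (toPoly (r 0 0) * toPoly (r 1 1) - toPoly (r 0 1) * toPoly (r 1 0))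

/-! A relation `a • Syz¹ + b • Syz² = 0` reads `∑ₖ (a r₀ₖ + b r₁ₖ) ⊗ mₖ = 0`, where `mₖ` are the
maximal minors of `r`. If the minors are linearly independent, the row combination `(a, b) · r`
vanishes, so `(ℂ ∙ (a, b), 0)` is a destabilising subrepresentation.

Otherwise `∑ₖ cₖ mₖ = 0` with `c = u × u' ≠ 0`, and by the Lagrange identity the 2×2 matrix of
linear forms `r · (u u')` has identically vanishing determinant. A product of two nonzero linear
forms is nonzero, so such a matrix has a constant left or right kernel vector. A left kernel
vector `v` gives the subrepresentation `(ℂ ∙ v, u⊥ ∩ u'⊥)` of dimension `(1, 1)`, a right one `f`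
gives `(ℂ², g⊥)` with `g = f₀ u + f₁ u'`, of dimension `(2, 2)`; both contradict stability. -/

open Matrix Module

theorem TensorProduct.eq_zero_of_linearIndependent_of_sum_tmul_eq_zero {K M N ι : Type*}
    [Field K] [AddCommGroup M] [Module K M] [AddCommGroup N] [Module K N] [Fintype ι]
    {x : ι → M} {y : ι → N} (hy : LinearIndependent K y) (h : ∑ i, x i ⊗ₜ[K] y i = 0) (j : ι) :
    x j = 0 := by
  classical
  obtain ⟨φ, hφ⟩ := LinearMap.exists_extend ((Module.Basis.span hy).coord j)
  have hφy : ∀ i, φ (y i) = if i = j then 1 else 0 := fun i => by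
    have := LinearMap.congr_fun hφ (Module.Basis.span hy i)
    rw [LinearMap.comp_apply, Module.Basis.coord_apply, Module.Basis.repr_self,
      Submodule.subtype_apply, Module.Basis.span_apply] at this
    rw [this, Finsupp.single_apply]
  simpa [hφy] using congrArg ((TensorProduct.rid K M).toLinearMap ∘ₗ LinearMap.lTensor M φ) h

section LinearForms
variable {K V : Type*} [Field K] [AddCommGroup V] [Module K V]

theorem LinearMap.eq_zero_or_eq_zero_of_forall_mul_eq_zero {f g : V →ₗ[K] K}
    (h : ∀ w, f w * g w = 0) : f = 0 ∨ g = 0 := by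
  by_contra! hfg
  obtain ⟨x, hx⟩ := DFunLike.ne_iff.mp hfg.1
  obtain ⟨y, hy⟩ := DFunLike.ne_iff.mp hfg.2
  have hgx : g x = 0 := (mul_eq_zero.mp (h x)).resolve_left hx
  have hfy : f y = 0 := (mul_eq_zero.mp (h y)).resolve_right hy
  have := h (x + y)
  simp_all

theorem LinearMap.exists_smul_eq_of_ker_le {f g : V →ₗ[K] K} (h : ker f ≤ ker g) :
    ∃ l : K, l • f = g := by
  have := mem_span_of_iInf_ker_le_ker (L := fun _ : Unit => f) (by simpa using h)
  simpa [Submodule.mem_span_singleton] using this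

theorem LinearMap.ker_le_or_ker_le_of_forall_mul_eq_zero {f g h : V →ₗ[K] K}
    (hfgh : ∀ w, f w = 0 → g w * h w = 0) : ker f ≤ ker g ∨ ker f ≤ ker h := by
  have := eq_zero_or_eq_zero_of_forall_mul_eq_zero (f := g.domRestrict (ker f))
    (g := h.domRestrict (ker f)) fun w => hfgh w w.2
  exact this.imp (fun hg w hw => by simpa using LinearMap.congr_fun hg ⟨w, hw⟩)
    (fun hh w hw => by simpa using LinearMap.congr_fun hh ⟨w, hw⟩)

theorem LinearMap.eq_smul_of_forall_mul_eq {a c d : V →ₗ[K] K} (ha : a ≠ 0) (l : K)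
    (h : ∀ w, a w * d w = l * a w * c w) : d = l • c := by
  refine sub_eq_zero.mp ((eq_zero_or_eq_zero_of_forall_mul_eq_zero (f := a) (g := d - l • c)
    fun w => ?_).resolve_left ha)
  simp only [sub_apply, smul_apply, smul_eq_mul]
  linear_combination h w

theorem Matrix.exists_vecMul_eq_zero_or_exists_mulVec_eq_zero_of_det_eq_zero
    (M : V →ₗ[K] Matrix (Fin 2) (Fin 2) K) (h : ∀ w, (M w).det = 0) :
    (∃ v ≠ 0, ∀ w, v ᵥ* M w = 0) ∨ (∃ v ≠ 0, ∀ w, M w *ᵥ v = 0) := by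
  let e : Fin 2 → Fin 2 → V →ₗ[K] K := fun i j => entryLinearMap K K i j ∘ₗ M
  have he : ∀ i j w, e i j w = M w i j := fun _ _ _ => rfl
  have hdet : ∀ w, e 0 0 w * e 1 1 w = e 0 1 w * e 1 0 w := fun w => by
    simpa [he, det_fin_two, sub_eq_zero] using h w
  have hvecMul : ∀ v : Fin 2 → K, (∀ w, v 0 * e 0 0 w + v 1 * e 1 0 w = 0 ∧
      v 0 * e 0 1 w + v 1 * e 1 1 w = 0) → ∀ w, v ᵥ* M w = 0 := by
    intro v hv w
    ext j; fin_cases j <;> simp [vecMul, dotProduct, Fin.sum_univ_two, ← he, hv w]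
  have hmulVec : ∀ v : Fin 2 → K, (∀ w, e 0 0 w * v 0 + e 0 1 w * v 1 = 0 ∧
      e 1 0 w * v 0 + e 1 1 w * v 1 = 0) → ∀ w, M w *ᵥ v = 0 := by
    intro v hv w
    ext i; fin_cases i <;> simp [mulVec, dotProduct, Fin.sum_univ_two, ← he, hv w]
  have hv₀ : (![1, 0] : Fin 2 → K) ≠ 0 := fun h => by simpa using congrFun h 0
  by_cases ha : e 0 0 = 0
  · rcases LinearMap.eq_zero_or_eq_zero_of_forall_mul_eq_zero (f := e 0 1) (g := e 1 0)
      (fun w => by simpa [ha] using (hdet w).symm) with hb | hc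
    · exact .inl ⟨_, hv₀, hvecMul _ fun w => by simp [ha, hb]⟩
    · exact .inr ⟨_, hv₀, hmulVec _ fun w => by simp [ha, hc]⟩
  have hv₁ : ∀ l : K, ![l, -1] ≠ 0 := fun l h => by simpa using congrFun h 1
  rcases LinearMap.ker_le_or_ker_le_of_forall_mul_eq_zero (f := e 0 0) (g := e 0 1) (h := e 1 0)
    (fun w hw => by rw [← hdet w, hw, zero_mul]) with hb | hc
  · obtain ⟨l, hl⟩ := LinearMap.exists_smul_eq_of_ker_le hb
    have hlw w : l * e 0 0 w = e 0 1 w := by simpa using LinearMap.congr_fun hl w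
    have hd := LinearMap.eq_smul_of_forall_mul_eq (c := e 1 0) ha l fun w => by
      rw [hdet w, ← hlw]
    exact .inr ⟨_, hv₁ l, hmulVec _ fun w => by simp [← hlw, hd, mul_comm]⟩
  · obtain ⟨l, hl⟩ := LinearMap.exists_smul_eq_of_ker_le hc
    have hlw w : l * e 0 0 w = e 1 0 w := by simpa using LinearMap.congr_fun hl w
    have hd := LinearMap.eq_smul_of_forall_mul_eq (c := e 0 1) ha l fun w => by
      rw [hdet w, ← hlw]; ring
    exact .inl ⟨_, hv₁ l, hvecMul _ fun w => by simp [← hlw, hd]⟩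

end LinearForms

theorem exists_cross_eq {K : Type*} [Field K] {c : Fin 3 → K} (hc : c ≠ 0) :
    ∃ u u' : Fin 3 → K, u ⨯₃ u' = c := by
  obtain ⟨k, hk⟩ := Function.ne_iff.mp hc
  fin_cases k <;> simp only [Fin.zero_eta, Fin.mk_one, Fin.reduceFinMk, Pi.zero_apply] at hk
  · exact ⟨![-c 1 / c 0, 1, 0], ![-c 2, 0, c 0], by
      ext i; fin_cases i <;> simp [cross_apply]; field_simp⟩
  · exact ⟨![0, -c 2 / c 1, 1], ![c 1, -c 0, 0], by
      ext i; fin_cases i <;> simp [cross_apply]; field_simp⟩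
  · exact ⟨![1, 0, -c 0 / c 2], ![0, c 2, -c 1], by
      ext i; fin_cases i <;> simp [cross_apply]; field_simp⟩

theorem finrank_ker_mulVecLin_of_linearIndependent {K m n : Type*} [Field K] [Fintype m]
    [Fintype n] {U : Matrix m n K} (hU : LinearIndependent K U.row) :
    finrank K (LinearMap.ker U.mulVecLin) = Fintype.card n - Fintype.card m := by
  have := LinearMap.finrank_range_add_finrank_ker U.mulVecLin
  rw [← Matrix.rank, hU.rank_matrix, finrank_fintype_fun_eq_card] at this
  omega

namespace KStable

variable {ρ : Fin 3 → (Fin 2 → ℂ) →ₗ[ℂ] Fin 3 → ℂ}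

theorem one_lt_finrank (hρ : KStable ρ) {v : Fin 2 → ℂ} (hv : v ≠ 0)
    {U₂ : Submodule ℂ (Fin 3 → ℂ)} (hU₂ : ∀ k, ρ k v ∈ U₂) : 1 < finrank ℂ U₂ := by
  by_contra! hle
  have hU₂top : U₂ ≠ ⊤ := by rintro rfl; simp at hle
  have := hρ (ℂ ∙ v) U₂ (fun k => by
    rw [Submodule.map_span, Set.image_singleton, Submodule.span_singleton_le_iff_mem]
    exact hU₂ k)
    (fun h => hv (Submodule.span_singleton_eq_bot.mp h.1)) (fun h => hU₂top h.2)
  rw [finrank_span_singleton hv] at this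
  omega

theorem eq_top (hρ : KStable ρ) {U₂ : Submodule ℂ (Fin 3 → ℂ)} (hU₂ : ∀ k v, ρ k v ∈ U₂) :
    U₂ = ⊤ := by
  by_contra hU₂top
  have := hρ ⊤ U₂ (fun k => by rintro _ ⟨v, -, rfl⟩; exact hU₂ k v)
    (fun h => top_ne_bot h.1) (fun h => hU₂top h.2)
  have := Submodule.finrank_lt hU₂top
  simp only [finrank_top, finrank_fin_fun] at *
  omega

end KStable

def pencil (r : Matrix (Fin 2) (Fin 3) (Fin 3 → ℂ)) :
    (Fin 3 → ℂ) →ₗ[ℂ] Matrix (Fin 2) (Fin 3) ℂ where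
  toFun w := r.map (· ⬝ᵥ w)
  map_add' _ _ := by ext; simp [dotProduct_add]
  map_smul' _ _ := by ext; simp [dotProduct_smul]

theorem eval_toPoly (w a : Fin 3 → ℂ) : eval w (toPoly a) = a ⬝ᵥ w := by
  simp [toPoly, dotProduct]

section Pencil

variable (r : Matrix (Fin 2) (Fin 3) (Fin 3 → ℂ))

theorem repOf_apply (k : Fin 3) (v : Fin 2 → ℂ) :
    repOf r k v = v ᵥ* pencil r (Pi.single k 1) := by
  ext j; simp [repOf, pencil, vecMul, dotProduct, Fin.sum_univ_two, Pi.single_apply]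

theorem eval_minor (w : Fin 3 → ℂ) :
    (fun k => eval w (minor r k)) = pencil r w 0 ⨯₃ pencil r w 1 := by
  ext k; fin_cases k <;> simp [minor, minorP, pencil, cross_apply, eval_toPoly]

theorem det_pencil_mul_transpose (w u u' : Fin 3 → ℂ) :
    (pencil r w * (of ![u, u'])ᵀ).det = (fun k => eval w (minor r k)) ⬝ᵥ u ⨯₃ u' := by
  rw [eval_minor, cross_dot_cross, det_fin_two]
  simp [mul_apply, dotProduct]

theorem syz1_eq_sum : syz1 r = ∑ k, toPoly (r 0 k) ⊗ₜ[ℂ] minor r k := by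
  simp only [syz1, Fin.sum_univ_three, minor, minorP, of_apply, Fin.reduceAdd, tmul_sub]
  abel

theorem syz2_eq_sum : syz2 r = ∑ k, toPoly (r 1 k) ⊗ₜ[ℂ] minor r k := by
  simp only [syz2, Fin.sum_univ_three, minor, minorP, of_apply, Fin.reduceAdd, tmul_sub]
  abel

theorem smul_syz1_add_smul_syz2 (a b : ℂ) :
    a • syz1 r + b • syz2 r =
      ∑ k, (a • toPoly (r 0 k) + b • toPoly (r 1 k)) ⊗ₜ[ℂ] minor r k := by
  simp only [syz1_eq_sum, syz2_eq_sum, Finset.smul_sum, ← Finset.sum_add_distrib, add_tmul,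
    smul_tmul']

variable {r}

theorem linearIndependent_syz_of_linearIndependent_minor (h : KStable (repOf r))
    (hm : LinearIndependent ℂ (minor r)) : LinearIndependent ℂ ![syz1 r, syz2 r] := by
  rw [LinearIndependent.pair_iff]
  intro a b hab
  have hcoef := TensorProduct.eq_zero_of_linearIndependent_of_sum_tmul_eq_zero hm
    (by rw [← smul_syz1_add_smul_syz2, hab])
  have hrow : ∀ w, ![a, b] ᵥ* pencil r w = 0 := fun w => by
    ext j
    simpa [vecMul, dotProduct, pencil, eval_toPoly] using congrArg (eval w) (hcoef j)
  by_contra hab0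
  have hv : ![a, b] ≠ 0 := fun h0 =>
    hab0 ⟨by simpa using congrFun h0 0, by simpa using congrFun h0 1⟩
  have := h.one_lt_finrank hv (U₂ := ⊥) fun k => by simp [repOf_apply, hrow]
  simp at this

theorem KStable.exists_det_pencil_mul_transpose_ne_zero (h : KStable (repOf r))
    {U : Matrix (Fin 2) (Fin 3) ℂ} (hU : LinearIndependent ℂ U.row) :
    ∃ w, (pencil r w * Uᵀ).det ≠ 0 := by
  by_contra! hdet
  rcases exists_vecMul_eq_zero_or_exists_mulVec_eq_zero_of_det_eq_zero
    (mulRightLinearMap (Fin 2) ℂ Uᵀ ∘ₗ pencil r) hdet with ⟨v, hv, hvM⟩ | ⟨f, hf, hMf⟩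
  · have := h.one_lt_finrank hv (U₂ := LinearMap.ker U.mulVecLin) fun k => by
      simpa [repOf_apply, ← vecMul_transpose, vecMul_vecMul] using hvM (Pi.single k 1)
    rw [finrank_ker_mulVecLin_of_linearIndependent hU] at this
    simp at this
  · have hg : ∀ k v, repOf r k v ∈ LinearMap.ker (dotProductEquiv ℂ (Fin 3) (f ᵥ* U)) := by
      intro k v
      have := hMf (Pi.single k 1)
      simp only [LinearMap.comp_apply, mulRightLinearMap_apply, ← mulVec_mulVec,
        mulVec_transpose] at this
      simp [repOf_apply, dotProduct_comm (f ᵥ* U), ← dotProduct_mulVec, this]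
    have := h.eq_top hg
    rw [LinearMap.ker_eq_top, LinearEquiv.map_eq_zero_iff] at this
    exact hf (vecMul_injective_iff.mpr hU (by simp [this]))

theorem linearIndependent_minor (h : KStable (repOf r)) : LinearIndependent ℂ (minor r) := by
  rw [Fintype.linearIndependent_iff]
  intro c hc
  by_contra hne
  have hc0 : c ≠ 0 := fun h0 => hne (congrFun h0)
  obtain ⟨u, u', rfl⟩ := exists_cross_eq hc0
  obtain ⟨w, hw⟩ := h.exists_det_pencil_mul_transpose_ne_zero
    (U := of ![u, u']) (crossProduct_ne_zero_iff_linearIndependent.mp hc0)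
  apply hw
  rw [det_pencil_mul_transpose]
  simpa [dotProduct, mul_comm] using congrArg (eval w) hc

end Pencil

/-- If the 2×3 matrix `r = (A B C; D E F)` with entries in `W` determines a
stable representation of the 3-Kronecker quiver of dimension vector `(2,3)`, then the two
tensors `Syz¹_r` and `Syz²_r` are linearly independent in `W ⊗ S²W`. -/
theorem stmt3 (r : Matrix (Fin 2) (Fin 3) (Fin 3 → ℂ)) (h : KStable (repOf r)) :
    LinearIndependent ℂ ![syz1 r, syz2 r] :=
  linearIndependent_syz_of_linearIndependent_minor h (linearIndependent_minor h)
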